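/- Let L := ∑_{m≥1, m odd} (2/m)·z^m ∈ ℚ⟦z⟧ (the formal power series of ln((1+z)/(1−z))). Then for all integers k ≥ 1 and n ≥ k, the coefficient of z^n in L^k equals S^{(k)}(n) := ∑_{m=k}^{n} binom(n−1, m−1)·(2^m·k!/m!)·s(m,k), and the coefficient of z^n in L^k is 0 for 0 ≤ n < k. -/

import Mathlib

/-- Signed Stirling numbers of the first kind: `t(t-1)⋯(t-m+1) = ∑_k s(m,k) t^k`. -/
noncomputable def stirling1 (m k : ℕ) : ℚ := (descPochhammer ℚ m).coeff k

/-- `S^{(k)}(n) = ∑_{m=k}^n binom(n-1,m-1)·(2^m k!/m!)·s(m,k)`. -/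
noncomputable def Sfun (k n : ℕ) : ℚ :=
  ∑ m ∈ Finset.Icc k n,
    ((n - 1).choose (m - 1) : ℚ) * (2 ^ m * (Nat.factorial k) / (Nat.factorial m))
      * stirling1 m k

/-- `L = ∑_{m odd} (2/m) z^m`, the power series of `ln((1+z)/(1-z))`. -/
noncomputable def L : PowerSeries ℚ :=
  PowerSeries.mk fun m => if Odd m then 2 / (m : ℚ) else 0

/-!
Since (1+z)/(1-z) = 1 + 2u with u = z/(1-z), L is log(1+X) evaluated at 2u; both sides have
derivative 2/(1-z²). Hence [z^n] L^k = ∑_m [X^m] log(1+X)^k · 2^m · [z^n] u^m, with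
[z^n] u^m = binom(n-1, m-1). Differentiating gives (1+X)·(log(1+X)^(k+1))' = (k+1)·log(1+X)^k,
so m!·[X^m] log(1+X)^k satisfies the recursion s(m+1,k+1) = s(m,k) - m·s(m,k+1) of k!·s(m,k).
-/

open PowerSeries Finset

lemma stirling1_eq_zero_of_lt {m k : ℕ} (h : m < k) : stirling1 m k = 0 :=
  Polynomial.coeff_eq_zero_of_natDegree_lt (by rwa [descPochhammer_natDegree])

lemma stirling1_zero_right (m : ℕ) : stirling1 m 0 = if m = 0 then 1 else 0 := by
  rw [stirling1, Polynomial.coeff_zero_eq_eval_zero, descPochhammer_eval_zero]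

lemma stirling1_succ_succ (m k : ℕ) :
    stirling1 (m + 1) (k + 1) = stirling1 m k - m * stirling1 m (k + 1) := by
  rw [stirling1, stirling1, stirling1, descPochhammer_succ_right, mul_sub, Polynomial.coeff_sub,
    Polynomial.coeff_mul_X, Polynomial.coeff_mul_natCast, mul_comm]

namespace PowerSeries

variable {A : Type*} [CommRing A]

lemma coeff_one_add_X_mul_derivative (f : A⟦X⟧) (m : ℕ) :
    coeff m ((1 + X) * d⁄dX A f) = (m + 1) * coeff (m + 1) f + m * coeff m f := by
  rw [add_mul, one_mul, map_add, coeff_derivative]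
  cases m with
  | zero => simp
  | succ m => rw [coeff_succ_X_mul, coeff_derivative]; push_cast; ring

variable [Algebra ℚ A]

lemma one_add_X_mul_derivative_log : (1 + X) * d⁄dX A (log A) = 1 := by
  ext m
  rw [deriv_log, add_mul, one_mul, map_add, coeff_one]
  cases m with
  | zero => simp
  | succ m => simp [coeff_succ_X_mul, pow_succ]

lemma one_add_X_mul_derivative_log_pow (k : ℕ) :
    (1 + X) * d⁄dX A (log A ^ (k + 1)) = ((k : A⟦X⟧) + 1) * log A ^ k := by
  rw [derivative_pow, Nat.add_sub_cancel, mul_comm, mul_assoc, mul_comm (d⁄dX A _),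
    one_add_X_mul_derivative_log]
  push_cast; ring

end PowerSeries

lemma coeff_log_pow (k m : ℕ) :
    coeff m (log ℚ ^ k) = k.factorial / m.factorial * stirling1 m k := by
  induction k generalizing m with
  | zero =>
    rw [pow_zero, coeff_one, stirling1_zero_right]
    split_ifs <;> simp_all
  | succ k ihk =>
    induction m with
    | zero =>
      rw [stirling1_eq_zero_of_lt k.succ_pos, coeff_zero_eq_constantCoeff, map_pow,
        constantCoeff_log, zero_pow k.succ_ne_zero, mul_zero]
    | succ m ihm =>
      have hrec := congrArg (coeff m) (one_add_X_mul_derivative_log_pow (A := ℚ) k)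
      rw [coeff_one_add_X_mul_derivative, ihm, show ((k : ℚ⟦X⟧) + 1) = C ((k : ℚ) + 1) by simp,
        coeff_C_mul, ihk] at hrec
      rw [stirling1_succ_succ]
      simp only [Nat.factorial_succ] at hrec ⊢
      push_cast at hrec ⊢
      field_simp at hrec ⊢
      linear_combination hrec

namespace PowerSeries

variable (S : Type*) [CommRing S]

noncomputable def xDivOneSubX : S⟦X⟧ := X * (invOneSubPow S 1).val

lemma one_sub_X_mul_xDivOneSubX : (1 - X) * xDivOneSubX S = X := by
  rw [xDivOneSubX, mul_left_comm, ← pow_one (1 - X), ← invOneSubPow_inv_eq_one_sub_pow,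
    Units.inv_val, mul_one]

lemma constantCoeff_xDivOneSubX : constantCoeff (xDivOneSubX S) = 0 := by
  simp [xDivOneSubX]

lemma hasSubst_xDivOneSubX : HasSubst (xDivOneSubX S) :=
  HasSubst.of_constantCoeff_zero' (constantCoeff_xDivOneSubX S)

lemma xDivOneSubX_pow (d : ℕ) : xDivOneSubX S ^ d = X ^ d * (invOneSubPow S d).val := by
  rw [xDivOneSubX, mul_pow, ← Units.val_pow_eq_pow_val, invOneSubPow_eq_inv_one_sub_pow,
    invOneSubPow_eq_inv_one_sub_pow, pow_one]

variable {S}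

lemma coeff_xDivOneSubX_pow_of_lt {n d : ℕ} (h : n < d) : coeff n (xDivOneSubX S ^ d) = 0 := by
  rw [xDivOneSubX_pow, coeff_X_pow_mul', if_neg h.not_ge]

lemma coeff_xDivOneSubX_pow {n d : ℕ} (hd : 0 < d) (h : d ≤ n) :
    coeff n (xDivOneSubX S ^ d) = (n - 1).choose (d - 1) := by
  rw [xDivOneSubX_pow, coeff_X_pow_mul', if_pos h,
    invOneSubPow_val_eq_mk_sub_one_add_choose_of_pos S d hd, coeff_mk]
  congr 2
  omega

end PowerSeries

lemma coeff_derivative_L (n : ℕ) : coeff n (d⁄dX ℚ L) = if Even n then 2 else 0 := by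
  simp only [coeff_derivative, L, coeff_mk, Nat.odd_add_one, Nat.not_odd_iff_even]
  split_ifs
  · push_cast; field_simp
  · simp

lemma one_sub_X_sq_mul_derivative_L : (1 - X ^ 2) * d⁄dX ℚ L = 2 := by
  ext n
  rw [sub_mul, one_mul, map_sub, ← map_ofNat (C (R := ℚ)) 2, coeff_C, coeff_X_pow_mul',
    coeff_derivative_L]
  rcases n with _ | _ | n <;> simp [coeff_derivative_L, Nat.even_add_one]

lemma one_sub_X_sq_mul_derivative_log_subst :
    (1 - X ^ 2) * d⁄dX ℚ ((log ℚ).subst (2 * xDivOneSubX ℚ)) = 2 := by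
  set g : ℚ⟦X⟧ := 2 * xDivOneSubX ℚ
  have hg : HasSubst g := (hasSubst_xDivOneSubX ℚ).mul_right
  have hgX : (1 - X) * g = 2 * X := by
    rw [mul_left_comm, one_sub_X_mul_xDivOneSubX]
  have hdg : (1 - X) ^ 2 * d⁄dX ℚ g = 2 := by
    have := congrArg (d⁄dX ℚ) hgX
    rw [← map_ofNat (C (R := ℚ)) 2] at this
    simp only [Derivation.leibniz, map_sub, derivative_X, Derivation.map_one_eq_zero, derivative_C,
      smul_eq_mul] at this
    rw [map_ofNat] at this
    linear_combination (1 - X) * this + hgX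
  have hlog : (1 + g) * (d⁄dX ℚ (log ℚ)).subst g = 1 := by
    have := congrArg (substAlgHom hg) (one_add_X_mul_derivative_log (A := ℚ))
    rwa [map_mul, map_add, map_one, substAlgHom_X, coe_substAlgHom] at this
  rw [derivative_subst hg]
  linear_combination (-(1 - X) * (d⁄dX ℚ (log ℚ)).subst g * d⁄dX ℚ g) * hgX
    + ((1 - X) ^ 2 * d⁄dX ℚ g) * hlog + hdg

lemma L_eq_log_subst : L = (log ℚ).subst (2 * xDivOneSubX ℚ) := by
  have h : (1 - X ^ 2 : ℚ⟦X⟧) ≠ 0 := fun h => by simpa using congrArg constantCoeff h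
  refine derivative.ext (mul_left_cancel₀ h ?_) ?_
  · rw [one_sub_X_sq_mul_derivative_L, one_sub_X_sq_mul_derivative_log_subst]
  · have hg0 : constantCoeff (2 * xDivOneSubX ℚ) = 0 := by
      rw [map_mul, constantCoeff_xDivOneSubX, mul_zero]
    trans 0
    · simp [L]
    · exact (constantCoeff_subst_eq_zero hg0 _ constantCoeff_log).symm

lemma coeff_L_pow_eq_sum (k n : ℕ) :
    coeff n (L ^ k) = ∑ d ∈ Icc k n,
      k.factorial / d.factorial * stirling1 d k * 2 ^ d * coeff n (xDivOneSubX ℚ ^ d) := by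
  have hg : HasSubst (2 * xDivOneSubX ℚ) := (hasSubst_xDivOneSubX ℚ).mul_right
  have hsupp : (Function.support fun d => coeff d (log ℚ ^ k) • coeff n ((2 * xDivOneSubX ℚ) ^ d))
      ⊆ Icc k n := by
    intro d hd
    rw [coe_Icc, Set.mem_Icc]
    by_contra! h
    refine hd ?_
    dsimp only
    rcases lt_or_ge d k with hdk | hkd
    · rw [coeff_log_pow, stirling1_eq_zero_of_lt hdk, mul_zero, zero_smul]
    · rw [mul_pow, ← map_ofNat (C (R := ℚ)), ← map_pow, coeff_C_mul,
        coeff_xDivOneSubX_pow_of_lt (h hkd), mul_zero, smul_zero]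
  rw [L_eq_log_subst, ← subst_pow hg, coeff_subst' hg, finsum_eq_sum_of_support_subset _ hsupp]
  refine sum_congr rfl fun d _ => ?_
  rw [coeff_log_pow, mul_pow, ← map_ofNat (C (R := ℚ)), ← map_pow, coeff_C_mul, smul_eq_mul]
  ring

/-- For `k ≥ 1` the coefficient of `z^n` in `L^k` equals `S^{(k)}(n)` when `n ≥ k`,
and is `0` when `n < k`. -/
theorem coeff_L_pow (k : ℕ) (hk : 1 ≤ k) (n : ℕ) :
    (k ≤ n → PowerSeries.coeff (R := ℚ) n (L ^ k) = Sfun k n)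
      ∧ (n < k → PowerSeries.coeff (R := ℚ) n (L ^ k) = 0) := by
  constructor
  · intro hkn
    rw [coeff_L_pow_eq_sum, Sfun]
    refine sum_congr rfl fun d hd => ?_
    rw [coeff_xDivOneSubX_pow (by grind) (mem_Icc.1 hd).2]
    ring
  · intro hnk
    rw [coeff_L_pow_eq_sum, Icc_eq_empty (by omega), sum_empty]
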